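/- arXiv:2208.06037 — 3 statements merged into one kernel-verified Lean document; each statement's English description precedes it below -/
import Mathlib

section
/- Let X₁, …, Xₙ be independent real random variables on a probability space with E[Xᵢ] = 0 for each i, and let K₁, …, Kₙ > 0 be such that for each i, exp(|Xᵢ|/Kᵢ) is integrable and E[exp(|Xᵢ|/Kᵢ) − 1 − |Xᵢ|/Kᵢ] ≤ 1. Set Sₙ = X₁ + ⋯ + Xₙ, B² = K₁² + ⋯ + Kₙ², and M = max(K₁, …, Kₙ). Then for every real x with x ≥ 2B²/M, P(Sₙ ≥ x) ≤ exp(−(x/M − B²/M²)). -/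
/-!
Chernoff's bound at `t = 1/M`. Writing `ψ₁₁(u) = exp u - 1 - u`, the pointwise inequality
`exp (t x) ≤ 1 + t x + (|t| K)² ψ₁₁(|x| / K)` for `|t| K ≤ 1` (from `ψ₁₁(c v) ≤ c² ψ₁₁(v)` when
`0 ≤ c ≤ 1`, `0 ≤ v`) integrates against a mean-zero `X` to `mgf X t ≤ 1 + (t K)² ≤ exp ((t K)²)`.
With `t = 1/M` every `Kᵢ/M ≤ 1`, and the mgf of the independent sum is at most `exp (B² / M²)`.
-/

open MeasureTheory ProbabilityTheory Finset Real

noncomputable def psi₁₁ (u : ℝ) : ℝ := exp u - 1 - u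

lemma hasDerivAt_psi₁₁ (w : ℝ) : HasDerivAt psi₁₁ (exp w - 1) w :=
  ((hasDerivAt_exp w).sub_const 1).sub (hasDerivAt_id w)

lemma psi₁₁_mul_le {c v : ℝ} (hc0 : 0 ≤ c) (hc1 : c ≤ 1) (hv : 0 ≤ v) :
    psi₁₁ (c * v) ≤ c ^ 2 * psi₁₁ v := by
  have hg : ∀ w, HasDerivAt (fun w => c ^ 2 * psi₁₁ w - psi₁₁ (c * w))
      (c * (c * (exp w - 1) - (exp (c * w) - 1))) w := fun w =>
    (((hasDerivAt_psi₁₁ w).const_mul (c ^ 2)).sub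
      ((hasDerivAt_psi₁₁ (c * w)).comp w ((hasDerivAt_id w).const_mul c))).congr_deriv (by ring)
  have hconv : ∀ w, exp (c * w) ≤ c * exp w + (1 - c) := fun w => by
    simpa [smul_eq_mul] using convexOn_exp.2 (Set.mem_univ w) (Set.mem_univ 0) hc0
      (by linarith : (0 : ℝ) ≤ 1 - c) (by ring)
  have := monotone_of_deriv_nonneg (fun w => (hg w).differentiableAt)
    (fun w => by rw [(hg w).deriv]; nlinarith [hconv w]) hv
  simp only [psi₁₁, mul_zero, exp_zero] at this ⊢
  linarith

lemma psi₁₁_le_psi₁₁_abs (s : ℝ) : psi₁₁ s ≤ psi₁₁ |s| := by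
  rcases le_or_gt 0 s with hs | hs
  · rw [abs_of_nonneg hs]
  · have := sinh_le_self_iff.2 hs.le
    rw [sinh_eq] at this
    simp only [psi₁₁, abs_of_neg hs]
    linarith

lemma exp_mul_le_one_add_mul_add_sq_mul_psi₁₁ {t K : ℝ} (hK : 0 < K) (ht : |t| * K ≤ 1)
    (y : ℝ) : exp (t * y) ≤ 1 + t * y + (|t| * K) ^ 2 * psi₁₁ (|y| / K) := by
  have hc : |t| * K * (|y| / K) = |t * y| := by field_simp; rw [abs_mul]
  have := (psi₁₁_le_psi₁₁_abs (t * y)).trans_eq (congrArg psi₁₁ hc.symm) |>.trans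
    (psi₁₁_mul_le (by positivity) ht (by positivity))
  simp only [psi₁₁] at this ⊢
  linarith

section Orlicz

variable {Ω : Type*} [MeasurableSpace Ω] {μ : Measure Ω} {X : Ω → ℝ} {K t : ℝ}

lemma integrable_exp_mul_of_integrable_exp_abs_div (hX : AEStronglyMeasurable X μ)
    (hK : 0 < K) (hint : Integrable (fun ω => exp (|X ω| / K)) μ) (ht : |t| * K ≤ 1) :
    Integrable (fun ω => exp (t * X ω)) μ := by
  refine hint.mono (continuous_exp.comp_aestronglyMeasurable (hX.const_mul t))
    (Filter.Eventually.of_forall fun ω => ?_)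
  simp only [norm_eq_abs, abs_exp, exp_le_exp]
  calc t * X ω ≤ |t| * |X ω| := by rw [← abs_mul]; exact le_abs_self _
    _ ≤ |X ω| / K := by rw [le_div_iff₀ hK]; nlinarith [abs_nonneg (X ω)]

lemma mgf_le_exp_sq_of_integral_psi₁₁_le_one [IsProbabilityMeasure μ] (hX : Integrable X μ)
    (hmean : μ[X] = 0) (hK : 0 < K) (hint : Integrable (fun ω => exp (|X ω| / K)) μ)
    (horlicz : ∫ ω, psi₁₁ (|X ω| / K) ∂μ ≤ 1) (ht : |t| * K ≤ 1) :
    mgf X μ t ≤ exp ((t * K) ^ 2) := by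
  have hψ : Integrable (fun ω => psi₁₁ (|X ω| / K)) μ :=
    (hint.sub (integrable_const 1)).sub (hX.abs.div_const K)
  calc mgf X μ t
      ≤ ∫ ω, (1 + t * X ω + (|t| * K) ^ 2 * psi₁₁ (|X ω| / K)) ∂μ :=
        integral_mono (integrable_exp_mul_of_integrable_exp_abs_div hX.1 hK hint ht)
          (((integrable_const 1).add (hX.const_mul t)).add (hψ.const_mul _))
          fun ω => exp_mul_le_one_add_mul_add_sq_mul_psi₁₁ hK ht (X ω)
    _ = 1 + (t * K) ^ 2 * ∫ ω, psi₁₁ (|X ω| / K) ∂μ := by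
        have hlin : Integrable (fun ω => 1 + t * X ω) μ :=
          (integrable_const 1).add (hX.const_mul t)
        rw [integral_add hlin (hψ.const_mul _), integral_add (integrable_const 1) (hX.const_mul t),
          integral_const_mul, integral_const_mul, hmean, mul_pow, sq_abs, ← mul_pow]
        simp
    _ ≤ 1 + (t * K) ^ 2 := by gcongr; exact mul_le_of_le_one_right (sq_nonneg _) horlicz
    _ ≤ exp ((t * K) ^ 2) := by linarith [add_one_le_exp ((t * K) ^ 2)]

end Orlicz

namespace ProbabilityTheory

variable {Ω ι : Type*} [MeasurableSpace Ω] {μ : Measure Ω} [Fintype ι] {X : ι → Ω → ℝ} {t : ℝ}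

lemma iIndepFun.integrable_exp_mul_sum₀ [IsFiniteMeasure μ] (hindep : iIndepFun X μ)
    (hmeas : ∀ i, AEMeasurable (X i) μ) (hint : ∀ i, Integrable (fun ω => exp (t * X i ω)) μ) :
    Integrable (fun ω => exp (t * ∑ i, X i ω)) μ := by
  set Y := fun i => (hmeas i).mk
  have hXY : ∀ i, X i =ᵐ[μ] Y i := fun i => (hmeas i).ae_eq_mk
  have hY := (hindep.congr hXY).integrable_exp_mul_sum (fun i => (hmeas i).measurable_mk)
    (s := univ) fun i _ => (hint i).congr (by filter_upwards [hXY i] with ω hω; rw [hω])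
  refine hY.congr ?_
  filter_upwards [ae_all_iff.2 hXY] with ω hω
  simp [Finset.sum_apply, hω]

lemma iIndepFun.measure_sum_ge_le_exp_mul_prod_mgf [IsProbabilityMeasure μ] (hindep : iIndepFun X μ)
    (hmeas : ∀ i, AEMeasurable (X i) μ) (ht : 0 ≤ t)
    (hint : ∀ i, Integrable (fun ω => exp (t * X i ω)) μ) (ε : ℝ) :
    μ.real {ω | ε ≤ ∑ i, X i ω} ≤ exp (-t * ε) * ∏ i, mgf (X i) μ t := by
  have hset : {ω | ε ≤ ∑ i, X i ω} = {ω | ε ≤ (∑ i, X i) ω} := by simp only [Finset.sum_apply]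
  rw [← hindep.mgf_sum₀ hmeas, hset]
  exact measure_ge_le_exp_mul_mgf ε ht
    (by simpa only [Finset.sum_apply] using hindep.integrable_exp_mul_sum₀ hmeas hint)

end ProbabilityTheory

theorem tail_le_exponential_part_general {Ω : Type*} [MeasureSpace Ω]
    [IsProbabilityMeasure (ℙ : Measure Ω)]
    {ι : Type*} [Fintype ι] [Nonempty ι]
    (X : ι → Ω → ℝ) (K : ι → ℝ)
    (hindep : iIndepFun X ℙ)
    (hXint : ∀ i, Integrable (X i)) (hmean : ∀ i, ∫ ω, X i ω = 0)
    (hK : ∀ i, 0 < K i)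
    (hint : ∀ i, Integrable (fun ω => Real.exp (|X i ω| / K i)))
    (horlicz : ∀ i, ∫ ω, (Real.exp (|X i ω| / K i) - 1 - |X i ω| / K i) ≤ 1)
    (B M : ℝ) (hB : B ^ 2 = ∑ i, K i ^ 2)
    (hM : M = Finset.univ.sup' Finset.univ_nonempty K)
    (x : ℝ) :
    (ℙ {ω | x ≤ ∑ i, X i ω}).toReal ≤ Real.exp (-(x / M - B ^ 2 / M ^ 2)) := by
  have hKM : ∀ i, K i ≤ M := fun i => hM ▸ le_sup' K (mem_univ i)
  have hMpos : 0 < M := (hK (Classical.arbitrary ι)).trans_le (hKM _)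
  have ht : ∀ i, |M⁻¹| * K i ≤ 1 := fun i => by
    rw [abs_inv, abs_of_pos hMpos, inv_mul_le_one₀ hMpos]; exact hKM i
  have hexp : ∀ i, Integrable (fun ω => exp (M⁻¹ * X i ω)) :=
    fun i => integrable_exp_mul_of_integrable_exp_abs_div (hXint i).1 (hK i) (hint i) (ht i)
  calc (ℙ : Measure Ω).real {ω | x ≤ ∑ i, X i ω}
      ≤ exp (-M⁻¹ * x) * ∏ i, mgf (X i) ℙ M⁻¹ :=
        hindep.measure_sum_ge_le_exp_mul_prod_mgf (fun i => (hXint i).aemeasurable)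
          (by positivity) hexp x
    _ ≤ exp (-M⁻¹ * x) * ∏ i, exp ((M⁻¹ * K i) ^ 2) := by
        gcongr with i
        · exact fun i _ => mgf_nonneg
        · exact mgf_le_exp_sq_of_integral_psi₁₁_le_one (hXint i) (hmean i) (hK i) (hint i)
            (horlicz i) (ht i)
    _ = exp (-(x / M - B ^ 2 / M ^ 2)) := by
        rw [← exp_sum, ← exp_add, hB, sum_div]
        congr 1
        simp only [inv_mul_eq_div, div_pow]
        ring

/-- Theorem 2, second case: for independent mean-zero `Xᵢ` with admissible `ψ₁₁`-Orlicz
constants `Kᵢ`, with `B² = ∑ Kᵢ²` and `M = max Kᵢ`, one has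
`P(Sₙ ≥ x) ≤ exp(−(x/M − B²/M²))` for `x ≥ 2B²/M`. -/
theorem tail_le_exponential_part {Ω : Type*} [MeasureSpace Ω]
    [IsProbabilityMeasure (ℙ : Measure Ω)]
    {ι : Type*} [Fintype ι] [Nonempty ι]
    (X : ι → Ω → ℝ) (K : ι → ℝ)
    (hindep : iIndepFun X ℙ)
    (hXint : ∀ i, Integrable (X i)) (hmean : ∀ i, ∫ ω, X i ω = 0)
    (hK : ∀ i, 0 < K i)
    (hint : ∀ i, Integrable (fun ω => Real.exp (|X i ω| / K i)))
    (horlicz : ∀ i, ∫ ω, (Real.exp (|X i ω| / K i) - 1 - |X i ω| / K i) ≤ 1)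
    (B M : ℝ) (hB : B ^ 2 = ∑ i, K i ^ 2)
    (hM : M = Finset.univ.sup' Finset.univ_nonempty K)
    (x : ℝ) (hx : 2 * B ^ 2 / M ≤ x) :
    (ℙ {ω | x ≤ ∑ i, X i ω}).toReal ≤ Real.exp (-(x / M - B ^ 2 / M ^ 2)) :=
  tail_le_exponential_part_general X K hindep hXint hmean hK hint horlicz B M hB hM x
end

section
/- Let ε > 0 and let X₁, …, Xₙ be independent real random variables on a probability space with E[Xᵢ] = 0 for each i, and let K₁, …, Kₙ > 0 be such that for each i, exp(|Xᵢ|/Kᵢ) is integrable and E[exp(|Xᵢ|/Kᵢ) − 1 − |Xᵢ|/Kᵢ] ≤ ε. Set Sₙ = X₁ + ⋯ + Xₙ, B² = ε·(K₁² + ⋯ + Kₙ²), and M = max(K₁, …, Kₙ). Then for every real x ≥ 0, P(Sₙ ≥ x) ≤ exp(−min(x²/(4B²), x/(2M))). -/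
/-!
Chernoff's method. By convexity of `exp`, `u ↦ a² ψ₁₁(u) − ψ₁₁(a u)` is monotone, so
`ψ₁₁(a u) ≤ a² ψ₁₁(u)` for `0 ≤ a ≤ 1`, `u ≥ 0`; also
`eᵗ ≤ 1 + t + ψ₁₁(|t|)`; with `E Xᵢ = 0` this yields `E e^{c Xᵢ} ≤ 1 + ε c² Kᵢ² ≤ e^{c² ε Kᵢ²}` for
`0 ≤ c ≤ 1 / M`. Independence then gives `P(Sₙ ≥ x) ≤ e^{-c x + c² B²}`, and the choice
`c = min (x / (2B²)) (1 / M)` bounds the exponent by `-min (x² / (4B²)) (x / (2M))`.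
-/

open MeasureTheory ProbabilityTheory Finset Real Set

noncomputable def psi11 (u : ℝ) : ℝ := exp u - 1 - u

lemma psi11_mul_le {a u : ℝ} (ha₀ : 0 ≤ a) (ha₁ : a ≤ 1) (hu : 0 ≤ u) :
    psi11 (a * u) ≤ a ^ 2 * psi11 u := by
  have hchord (v : ℝ) : exp (a * v) ≤ a * exp v + (1 - a) := by
    simpa using convexOn_exp.2 (mem_univ v) (mem_univ 0) ha₀ (sub_nonneg.2 ha₁) (by ring)
  let f v := a ^ 2 * psi11 v - psi11 (a * v)
  have hf (v : ℝ) : HasDerivAt f (a * (a * (exp v - 1) - (exp (a * v) - 1))) v := by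
    have hav : HasDerivAt (a * ·) a v := by simpa using (hasDerivAt_id v).const_mul a
    have hpsi := ((hasDerivAt_exp v).sub_const 1).sub (hasDerivAt_id v)
    have hpsia := (hav.exp.sub_const 1).sub hav
    exact ((hpsi.const_mul (a ^ 2)).sub hpsia).congr_deriv (by ring)
  have hmono : Monotone f :=
    monotone_of_hasDerivAt_nonneg hf fun v => mul_nonneg ha₀ (by linarith [hchord v])
  simpa [f, psi11] using hmono hu

lemma exp_le_one_add_add_psi11_abs (t : ℝ) : exp t ≤ 1 + t + psi11 |t| := by
  rcases le_or_gt 0 t with ht | ht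
  · simp [psi11, abs_of_nonneg ht]
  · have hsinh := Real.self_le_sinh_iff.2 (neg_nonneg.2 ht.le)
    rw [Real.sinh_eq, neg_neg] at hsinh
    simp only [psi11, abs_of_neg ht]
    linarith

section Measure

variable {Ω : Type*} {m : MeasurableSpace Ω} {μ : Measure Ω}

lemma integrable_exp_mul_of_integrable_exp_abs_div_s10 {Y : Ω → ℝ} {K c : ℝ} (hK : 0 < K)
    (hY : AEMeasurable Y μ) (hexp : Integrable (fun ω => exp (|Y ω| / K)) μ)
    (hc : 0 ≤ c) (hcK : c * K ≤ 1) :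
    Integrable (fun ω => exp (c * Y ω)) μ := by
  refine hexp.mono (hY.const_mul c).exp.aestronglyMeasurable (ae_of_all _ fun ω => ?_)
  simp only [norm_eq_abs, abs_exp, exp_le_exp]
  calc c * Y ω ≤ c * |Y ω| := mul_le_mul_of_nonneg_left (le_abs_self _) hc
    _ ≤ |Y ω| / K := by
      rw [le_div_iff₀ hK]
      nlinarith [abs_nonneg (Y ω)]

lemma mgf_le_exp_of_integral_psi11_le [IsProbabilityMeasure μ] {Y : Ω → ℝ} {K ε c : ℝ}
    (hK : 0 < K) (hY : Integrable Y μ) (hmean : μ[Y] = 0)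
    (hexp : Integrable (fun ω => exp (|Y ω| / K)) μ)
    (hpsi : ∫ ω, psi11 (|Y ω| / K) ∂μ ≤ ε) (hc : 0 ≤ c) (hcK : c * K ≤ 1) :
    mgf Y μ c ≤ exp (c ^ 2 * (ε * K ^ 2)) := by
  have hpt (ω : Ω) : exp (c * Y ω) ≤ 1 + c * Y ω + (c * K) ^ 2 * psi11 (|Y ω| / K) := by
    have habs : |c * Y ω| = c * K * (|Y ω| / K) := by
      rw [abs_mul, abs_of_nonneg hc]
      field_simp
    have hscale := psi11_mul_le (by positivity) hcK (by positivity : 0 ≤ |Y ω| / K)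
    linarith [exp_le_one_add_add_psi11_abs (c * Y ω), habs ▸ hscale]
  have hpsi_int : Integrable (fun ω => psi11 (|Y ω| / K)) μ :=
    (hexp.sub (integrable_const 1)).sub (hY.abs.div_const K)
  have hlin_int : Integrable (fun ω => 1 + c * Y ω) μ := (integrable_const 1).add (hY.const_mul c)
  calc mgf Y μ c
      ≤ ∫ ω, (1 + c * Y ω + (c * K) ^ 2 * psi11 (|Y ω| / K)) ∂μ :=
        integral_mono (integrable_exp_mul_of_integrable_exp_abs_div_s10 hK hY.aemeasurable hexp hc hcK)
          (hlin_int.add (hpsi_int.const_mul _)) hpt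
    _ = 1 + (c * K) ^ 2 * ∫ ω, psi11 (|Y ω| / K) ∂μ := by
        rw [integral_add hlin_int (hpsi_int.const_mul _), integral_add (integrable_const 1)
          (hY.const_mul c), integral_const_mul, integral_const_mul, hmean]
        simp
    _ ≤ 1 + c ^ 2 * (ε * K ^ 2) := by nlinarith [sq_nonneg (c * K)]
    _ ≤ exp (c ^ 2 * (ε * K ^ 2)) := by linarith [add_one_le_exp (c ^ 2 * (ε * K ^ 2))]

lemma ProbabilityTheory.iIndepFun.integrable_exp_mul_sum₀_s10 {ι : Type*} [IsFiniteMeasure μ] {X : ι → Ω → ℝ} {t : ℝ}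
    (hindep : iIndepFun X μ) (hmeas : ∀ i, AEMeasurable (X i) μ) {s : Finset ι}
    (hint : ∀ i ∈ s, Integrable (fun ω => exp (t * X i ω)) μ) :
    Integrable (fun ω => exp (t * (∑ i ∈ s, X i) ω)) μ := by
  have hXY (i : ι) := (hmeas i).ae_eq_mk
  have hsum := (hindep.congr hXY).integrable_exp_mul_sum (t := t) (fun i => (hmeas i).measurable_mk)
    fun i hi => (hint i hi).congr ((hXY i).mono fun ω h => by simp only [h])
  refine hsum.congr ?_
  filter_upwards [s.eventually_all.2 fun i _ => hXY i] with ω hω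
  simp only [Finset.sum_apply]
  rw [Finset.sum_congr rfl hω]

lemma measure_sum_ge_le_exp_of_mgf_le {ι : Type*} [Fintype ι] [IsProbabilityMeasure μ]
    {X : ι → Ω → ℝ} {v : ι → ℝ} {c : ℝ} (x : ℝ)
    (hindep : iIndepFun X μ) (hmeas : ∀ i, AEMeasurable (X i) μ)
    (hint : ∀ i, Integrable (fun ω => exp (c * X i ω)) μ)
    (hmgf : ∀ i, mgf (X i) μ c ≤ exp (c ^ 2 * v i)) (hc : 0 ≤ c) :
    μ.real {ω | x ≤ ∑ i, X i ω} ≤ exp (-(c * x) + c ^ 2 * ∑ i, v i) := by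
  have hchernoff := measure_ge_le_exp_mul_mgf x hc
    (hindep.integrable_exp_mul_sum₀_s10 hmeas (s := univ) fun i _ => hint i)
  simp only [Finset.sum_apply] at hchernoff
  calc μ.real {ω | x ≤ ∑ i, X i ω}
      ≤ exp (-c * x) * ∏ i, mgf (X i) μ c := hindep.mgf_sum₀ hmeas _ ▸ hchernoff
    _ ≤ exp (-c * x) * ∏ i, exp (c ^ 2 * v i) := by
        gcongr with i
        exacts [fun i _ => mgf_nonneg, hmgf i]
    _ = exp (-(c * x) + c ^ 2 * ∑ i, v i) := by
        rw [← exp_sum, ← exp_add, mul_sum, neg_mul]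

end Measure

lemma exists_mul_le_one_and_neg_mul_add_sq_mul_le_neg_min {b M x : ℝ} (hb : 0 < b)
    (hM : 0 < M) (hx : 0 ≤ x) :
    ∃ c, 0 ≤ c ∧ c * M ≤ 1 ∧ -(c * x) + c ^ 2 * b ≤ -min (x ^ 2 / (4 * b)) (x / (2 * M)) := by
  rcases le_or_gt (x / (2 * b)) (1 / M) with hsmall | hlarge
  · refine ⟨x / (2 * b), by positivity, (le_div_iff₀ hM).1 hsmall, ?_⟩
    have : -(x / (2 * b) * x) + (x / (2 * b)) ^ 2 * b = -(x ^ 2 / (4 * b)) := by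
      field_simp; ring
    linarith [min_le_left (x ^ 2 / (4 * b)) (x / (2 * M))]
  · refine ⟨1 / M, by positivity, by field_simp; rfl, ?_⟩
    rw [div_lt_div_iff₀ hM (by positivity)] at hlarge
    have : b / M ^ 2 ≤ x / (2 * M) := by
      rw [div_le_div_iff₀ (by positivity) (by positivity)]
      nlinarith
    have : -(1 / M * x) + (1 / M) ^ 2 * b = -(2 * (x / (2 * M))) + b / M ^ 2 := by
      field_simp
    linarith [min_le_right (x ^ 2 / (4 * b)) (x / (2 * M))]

/-- Theorem 2.ε, min form: for independent mean-zero `Xᵢ` with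
`E[exp(|Xᵢ|/Kᵢ) − 1 − |Xᵢ|/Kᵢ] ≤ ε`, with `B² = ε ∑ Kᵢ²` and `M = max Kᵢ`,
one has `P(Sₙ ≥ x) ≤ exp(−min(x²/(4B²), x/(2M)))` for all `x ≥ 0`. -/
theorem tail_le_min_form_eps {Ω : Type*} [MeasureSpace Ω]
    [IsProbabilityMeasure (ℙ : Measure Ω)]
    {ι : Type*} [Fintype ι] [Nonempty ι]
    (ε : ℝ) (hε : 0 < ε)
    (X : ι → Ω → ℝ) (K : ι → ℝ)
    (hindep : iIndepFun X ℙ)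
    (hXint : ∀ i, Integrable (X i)) (hmean : ∀ i, ∫ ω, X i ω = 0)
    (hK : ∀ i, 0 < K i)
    (hint : ∀ i, Integrable (fun ω => Real.exp (|X i ω| / K i)))
    (horlicz : ∀ i, ∫ ω, (Real.exp (|X i ω| / K i) - 1 - |X i ω| / K i) ≤ ε)
    (B M : ℝ) (hB : B ^ 2 = ε * ∑ i, K i ^ 2)
    (hM : M = Finset.univ.sup' Finset.univ_nonempty K)
    (x : ℝ) (hx0 : 0 ≤ x) :
    (ℙ {ω | x ≤ ∑ i, X i ω}).toReal ≤
      Real.exp (-(min (x ^ 2 / (4 * B ^ 2)) (x / (2 * M)))) := by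
  have hKM (i : ι) : K i ≤ M := hM ▸ le_sup' K (mem_univ i)
  have hM_pos : 0 < M := (hK (Classical.arbitrary ι)).trans_le (hKM _)
  have hB_pos : 0 < B ^ 2 := hB ▸ mul_pos hε (sum_pos (fun i _ => by have := hK i; positivity)
    univ_nonempty)
  obtain ⟨c, hc, hcM, hexponent⟩ :=
    exists_mul_le_one_and_neg_mul_add_sq_mul_le_neg_min hB_pos hM_pos hx0
  have hcK (i : ι) : c * K i ≤ 1 := (mul_le_mul_of_nonneg_left (hKM i) hc).trans hcM
  calc (ℙ {ω | x ≤ ∑ i, X i ω}).toReal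
      ≤ exp (-(c * x) + c ^ 2 * ∑ i, ε * K i ^ 2) :=
        measure_sum_ge_le_exp_of_mgf_le x hindep (fun i => (hXint i).aemeasurable)
          (fun i => integrable_exp_mul_of_integrable_exp_abs_div_s10 (hK i) (hXint i).aemeasurable
            (hint i) hc (hcK i))
          (fun i => mgf_le_exp_of_integral_psi11_le (hK i) (hXint i) (hmean i) (hint i)
            (horlicz i) hc (hcK i)) hc
    _ ≤ exp (-min (x ^ 2 / (4 * B ^ 2)) (x / (2 * M))) := by
        rwa [exp_le_exp, ← mul_sum, ← hB]
end

section
/- Let X be a real random variable with E[X] = 0 and let K > 0 be such that exp(|X|/K) is integrable and E[exp(|X|/K)] ≤ 2. Then for every real h with |h|·K < 1, E[exp(hX)] ≤ 1 + 2K²h²/(1 − K|h|) ≤ exp(2K²h²/(1 − K|h|)). -/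
/-! The tail `exp t - 1 - t` is at most its value at `|t|` (as `sinh t ≤ t` for `t ≤ 0`), and
comparing exponential series termwise, for `0 ≤ a ≤ 1` the tail at `a u` is at most `a²` times
the tail at `u ≥ 0`. With `a = |h| K` and `u = |x| / K` this gives
`exp (h x) ≤ 1 + h x + (K h)² exp (|x| / K)`; integrating, the mean-zero condition removes the
linear term and the `ψ₁` bound gives `E[exp (h X)] ≤ 1 + 2 K² h²`, already stronger than the
claim. -/

open MeasureTheory ProbabilityTheory
open scoped Nat

namespace Real

theorem hasSum_pow_div_factorial_add_two (x : ℝ) :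
    HasSum (fun n : ℕ => x ^ (n + 2) / (n + 2)!) (exp x - 1 - x) := by
  have hexp : HasSum (fun n : ℕ => x ^ n / n !) (exp x) := by
    rw [exp_eq_exp_ℝ]
    exact NormedSpace.expSeries_div_hasSum_exp x
  simpa [Finset.sum_range_succ, sub_sub] using (hasSum_nat_add_iff' 2).mpr hexp

theorem exp_mul_sub_one_sub_le {a u : ℝ} (ha₀ : 0 ≤ a) (ha₁ : a ≤ 1) (hu : 0 ≤ u) :
    exp (a * u) - 1 - a * u ≤ a ^ 2 * (exp u - 1 - u) := by
  refine hasSum_le (fun n => ?_) (hasSum_pow_div_factorial_add_two (a * u))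
    ((hasSum_pow_div_factorial_add_two u).mul_left (a ^ 2))
  rw [mul_pow, mul_div_assoc]
  exact mul_le_mul_of_nonneg_right (pow_le_pow_of_le_one ha₀ ha₁ (by omega)) (by positivity)

theorem exp_sub_one_sub_le_exp_abs_sub_one_sub (t : ℝ) :
    exp t - 1 - t ≤ exp |t| - 1 - |t| := by
  rcases le_or_gt 0 t with ht | ht
  · rw [abs_of_nonneg ht]
  · have hsinh : sinh t ≤ t := sinh_le_self_iff.mpr ht.le
    rw [sinh_eq] at hsinh
    rw [abs_of_neg ht]
    linarith

end Real

open Real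

theorem exp_mul_le_of_abs_mul_le_one {K h : ℝ} (hK : 0 < K) (hh : |h| * K ≤ 1) (x : ℝ) :
    exp (h * x) ≤ 1 + h * x + (K * h) ^ 2 * exp (|x| / K) := by
  have hu : 0 ≤ |x| / K := by positivity
  have habs : |h * x| = |h| * K * (|x| / K) := by
    rw [abs_mul]; field_simp
  have hseries : exp |h * x| - 1 - |h * x| ≤ (K * h) ^ 2 * (exp (|x| / K) - 1 - |x| / K) := by
    rw [habs, mul_comm K, mul_pow, ← sq_abs h, ← mul_pow]
    exact exp_mul_sub_one_sub_le (by positivity) hh hu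
  nlinarith [exp_sub_one_sub_le_exp_abs_sub_one_sub (h * x), sq_nonneg (K * h)]

theorem mgf_le_one_add_sq_mul_integral_exp_abs_div {Ω : Type*} [MeasurableSpace Ω]
    {μ : Measure Ω} [IsProbabilityMeasure μ] {X : Ω → ℝ} (hX : Integrable X μ)
    (hmean : μ[X] = 0) {K h : ℝ} (hK : 0 < K)
    (hint : Integrable (fun ω => exp (|X ω| / K)) μ) (hh : |h| * K ≤ 1) :
    mgf X μ h ≤ 1 + (K * h) ^ 2 * μ[fun ω => exp (|X ω| / K)] := by
  have hlin_int : Integrable (fun ω => 1 + h * X ω) μ := (integrable_const 1).add (hX.const_mul h)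
  have hbound_int : Integrable (fun ω => 1 + h * X ω + (K * h) ^ 2 * exp (|X ω| / K)) μ :=
    hlin_int.add (hint.const_mul _)
  have hexp_int : Integrable (fun ω => exp (h * X ω)) μ := by
    refine hbound_int.mono' (hX.aemeasurable.const_mul h).exp.aestronglyMeasurable ?_
    filter_upwards with ω
    rw [norm_of_nonneg (exp_pos _).le]
    exact exp_mul_le_of_abs_mul_le_one hK hh (X ω)
  calc mgf X μ h
      ≤ ∫ ω, 1 + h * X ω + (K * h) ^ 2 * exp (|X ω| / K) ∂μ :=
        integral_mono hexp_int hbound_int fun ω => exp_mul_le_of_abs_mul_le_one hK hh (X ω)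
    _ = 1 + (K * h) ^ 2 * μ[fun ω => exp (|X ω| / K)] := by
        rw [integral_add hlin_int (hint.const_mul _),
          integral_add (integrable_const 1) (hX.const_mul h), integral_const_mul,
          integral_const_mul, hmean]
        simp

/-- Streamlined 4)⟹5): if `E X = 0`, `K > 0` and `E[exp(|X|/K)] ≤ 2`, then for every
real `h` with `K |h| < 1`, `E[exp(hX)] ≤ 1 + 2K²h²/(1 − K|h|) ≤ exp(2K²h²/(1 − K|h|))`. -/
theorem mgf_le_bernstein_of_psi1_norm_le {Ω : Type*} [MeasureSpace Ω]
    [IsProbabilityMeasure (ℙ : Measure Ω)] (X : Ω → ℝ)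
    (hXint : Integrable X) (hmean : ∫ ω, X ω = 0)
    (K : ℝ) (hK : 0 < K)
    (hint : Integrable (fun ω => Real.exp (|X ω| / K)))
    (horlicz : ∫ ω, Real.exp (|X ω| / K) ≤ 2)
    (h : ℝ) (hh : |h| * K < 1) :
    (∫ ω, Real.exp (h * X ω)) ≤ 1 + 2 * K ^ 2 * h ^ 2 / (1 - K * |h|) ∧
      1 + 2 * K ^ 2 * h ^ 2 / (1 - K * |h|) ≤
        Real.exp (2 * K ^ 2 * h ^ 2 / (1 - K * |h|)) := by
  have hmgf : mgf X ℙ h ≤ 1 + (K * h) ^ 2 * 2 :=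
    (mgf_le_one_add_sq_mul_integral_exp_abs_div hXint hmean hK hint hh.le).trans
      (by gcongr)
  have hden₀ : 0 < 1 - K * |h| := by linarith [mul_comm K |h|]
  have hden₁ : 1 - K * |h| ≤ 1 := by linarith [mul_nonneg hK.le (abs_nonneg h)]
  have hdiv : 2 * K ^ 2 * h ^ 2 ≤ 2 * K ^ 2 * h ^ 2 / (1 - K * |h|) :=
    le_div_self (by positivity) hden₀ hden₁
  refine ⟨?_, by linarith [add_one_le_exp (2 * K ^ 2 * h ^ 2 / (1 - K * |h|))]⟩
  calc ∫ ω, exp (h * X ω) = mgf X ℙ h := rfl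
    _ ≤ 1 + 2 * K ^ 2 * h ^ 2 / (1 - K * |h|) := by linarith
end
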